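/- arXiv:1708.03708 — 4 statements merged into one kernel-verified Lean document; each statement's English description precedes it below -/
import Mathlib

section
/- Let m be a positive integer, K a real symmetric positive semidefinite m×m matrix, γ, λ, η > 0, and K_γ = K + γmI. Let K̄_γ be a real symmetric positive semidefinite m×m matrix with ‖K_γ − K̄_γ‖₂ ≤ ηm. Let Y ∈ ℝ^m with ‖Y‖₂ ≤ √m, and set α_γ = (K_γ + λmI)⁻¹ Y and ᾱ_γ = (K̄_γ + λmI)⁻¹ Y. Then ‖K̄_γ ᾱ_γ − Y‖₂ ≤ ‖K_γ α_γ − Y‖₂ + η√m/(λ + γ). -/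
/-!
Put `c = λm`, `u = (Kγ + cI)⁻¹Y` and `ū = (K̄γ + cI)⁻¹Y`. Both residuals are `-c` times the
solution: `Kγ u - Y = -c u` and `K̄γ ū - Y = -c ū`. Since `(K̄γ + cI)(ū - u) = (Kγ - K̄γ) u` and a
positive semidefinite shift by `cI` expands lengths by at least `c`, we get
`c ‖ū - u‖ ≤ ‖Kγ - K̄γ‖₂ ‖u‖ ≤ ηm ‖u‖`; finally `Kγ + cI = K + (λ + γ)m I` gives
`‖u‖ ≤ √m / ((λ + γ)m)`.
-/

open Matrix

/-- Spectral (operator 2-) norm of a real square matrix. -/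
noncomputable def spectralNorm2 {m : ℕ} (A : Matrix (Fin m) (Fin m) ℝ) : ℝ :=
  ‖Matrix.toEuclideanCLM (𝕜 := ℝ) A‖

/-- Euclidean (ℓ²) norm of a vector in ℝ^m. -/
noncomputable def l2norm {m : ℕ} (v : Fin m → ℝ) : ℝ :=
  Real.sqrt (∑ i, v i ^ 2)

lemma l2norm_eq_norm_toLp {m : ℕ} (v : Fin m → ℝ) : l2norm v = ‖WithLp.toLp 2 v‖ := by
  simp [l2norm, EuclideanSpace.norm_eq, sq_abs]

lemma l2norm_nonneg {m : ℕ} (v : Fin m → ℝ) : 0 ≤ l2norm v :=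
  Real.sqrt_nonneg _

lemma l2norm_smul {m : ℕ} (c : ℝ) (v : Fin m → ℝ) : l2norm (c • v) = |c| * l2norm v := by
  rw [l2norm_eq_norm_toLp, l2norm_eq_norm_toLp, WithLp.toLp_smul, norm_smul, Real.norm_eq_abs]

lemma l2norm_add_le {m : ℕ} (v w : Fin m → ℝ) : l2norm (v + w) ≤ l2norm v + l2norm w := by
  simpa only [l2norm_eq_norm_toLp, WithLp.toLp_add] using norm_add_le _ _

lemma l2norm_mulVec_le {m : ℕ} (A : Matrix (Fin m) (Fin m) ℝ) (v : Fin m → ℝ) :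
    l2norm (A *ᵥ v) ≤ spectralNorm2 A * l2norm v := by
  simpa only [l2norm_eq_norm_toLp, spectralNorm2, toEuclideanCLM_toLp]
    using (toEuclideanCLM (𝕜 := ℝ) A).le_opNorm (WithLp.toLp 2 v)

lemma spectralNorm2_nonneg {m : ℕ} (A : Matrix (Fin m) (Fin m) ℝ) : 0 ≤ spectralNorm2 A :=
  norm_nonneg _

lemma dotProduct_le_l2norm_mul_l2norm {m : ℕ} (v w : Fin m → ℝ) :
    v ⬝ᵥ w ≤ l2norm v * l2norm w := by
  simpa only [l2norm_eq_norm_toLp, EuclideanSpace.inner_toLp_toLp, star_trivial, dotProduct_comm w]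
    using real_inner_le_norm (WithLp.toLp 2 v) (WithLp.toLp 2 w)

lemma dotProduct_self_eq_l2norm_sq {m : ℕ} (v : Fin m → ℝ) : v ⬝ᵥ v = l2norm v ^ 2 := by
  simpa only [l2norm_eq_norm_toLp, EuclideanSpace.inner_toLp_toLp, star_trivial]
    using real_inner_self_eq_norm_sq (WithLp.toLp 2 v)

lemma Matrix.mulVec_nonsing_inv_mulVec {n α : Type*} [Fintype n] [DecidableEq n] [CommRing α]
    {A : Matrix n n α} (hA : IsUnit A.det) (v : n → α) : A *ᵥ (A⁻¹ *ᵥ v) = v := by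
  rw [mulVec_mulVec, mul_nonsing_inv _ hA, one_mulVec]

namespace Matrix.PosSemidef

variable {m : ℕ} {M : Matrix (Fin m) (Fin m) ℝ} {c : ℝ}

lemma mul_l2norm_le_l2norm_add_smul_one_mulVec (hM : M.PosSemidef) (v : Fin m → ℝ) :
    c * l2norm v ≤ l2norm ((M + c • 1) *ᵥ v) := by
  rcases (l2norm_nonneg v).eq_or_lt with hv | hv
  · rw [← hv, mul_zero]
    exact l2norm_nonneg _
  have hM_v : 0 ≤ v ⬝ᵥ (M *ᵥ v) := by simpa using hM.dotProduct_mulVec_nonneg v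
  have hsq : c * l2norm v * l2norm v ≤ l2norm ((M + c • 1) *ᵥ v) * l2norm v := calc
    c * l2norm v * l2norm v = c * (v ⬝ᵥ v) := by rw [dotProduct_self_eq_l2norm_sq]; ring
    _ ≤ v ⬝ᵥ (M *ᵥ v) + c * (v ⬝ᵥ v) := le_add_of_nonneg_left hM_v
    _ = v ⬝ᵥ ((M + c • 1) *ᵥ v) := by
      rw [add_mulVec, smul_mulVec, one_mulVec, dotProduct_add, dotProduct_smul, smul_eq_mul]
    _ ≤ l2norm v * l2norm ((M + c • 1) *ᵥ v) := dotProduct_le_l2norm_mul_l2norm _ _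
    _ = _ := mul_comm _ _
  exact le_of_mul_le_mul_right hsq hv

lemma isUnit_det_add_smul_one (hM : M.PosSemidef) (hc : 0 < c) : IsUnit (M + c • 1).det :=
  (PosDef.posSemidef_add hM (PosDef.one.smul hc)).det_pos.ne'.isUnit

lemma l2norm_inv_add_smul_one_mulVec_le (hM : M.PosSemidef) (hc : 0 < c) (v : Fin m → ℝ) :
    l2norm ((M + c • 1)⁻¹ *ᵥ v) ≤ l2norm v / c := by
  rw [le_div_iff₀ hc, mul_comm]
  have h := hM.mul_l2norm_le_l2norm_add_smul_one_mulVec (c := c) ((M + c • 1)⁻¹ *ᵥ v)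
  rwa [mulVec_nonsing_inv_mulVec (hM.isUnit_det_add_smul_one hc)] at h

end Matrix.PosSemidef

section Ridge

variable {m : ℕ} {K : Matrix (Fin m) (Fin m) ℝ} {c : ℝ}

lemma mulVec_inv_add_smul_one_mulVec_sub (hK : IsUnit (K + c • 1).det) (Y : Fin m → ℝ) :
    K *ᵥ ((K + c • 1)⁻¹ *ᵥ Y) - Y = -c • ((K + c • 1)⁻¹ *ᵥ Y) := by
  have hsolve := mulVec_nonsing_inv_mulVec hK Y
  rw [add_mulVec, smul_mulVec, one_mulVec] at hsolve
  set u := (K + c • 1)⁻¹ *ᵥ Y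
  rw [neg_smul, ← hsolve]
  abel

lemma l2norm_ridge_residual_le_add {Kbar : Matrix (Fin m) (Fin m) ℝ} (hKbar : Kbar.PosSemidef)
    (hc : 0 < c) (hK : IsUnit (K + c • 1).det) (Y : Fin m → ℝ) :
    l2norm (Kbar *ᵥ ((Kbar + c • 1)⁻¹ *ᵥ Y) - Y) ≤
      l2norm (K *ᵥ ((K + c • 1)⁻¹ *ᵥ Y) - Y) +
        spectralNorm2 (K - Kbar) * l2norm ((K + c • 1)⁻¹ *ᵥ Y) := by
  have hKbar' := hKbar.isUnit_det_add_smul_one hc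
  rw [mulVec_inv_add_smul_one_mulVec_sub hK, mulVec_inv_add_smul_one_mulVec_sub hKbar',
    l2norm_smul, l2norm_smul, abs_neg, abs_of_pos hc]
  set u := (K + c • 1)⁻¹ *ᵥ Y
  set ubar := (Kbar + c • 1)⁻¹ *ᵥ Y
  have hdiff : (Kbar + c • 1) *ᵥ (ubar - u) = (K - Kbar) *ᵥ u := by
    rw [mulVec_sub, mulVec_nonsing_inv_mulVec hKbar', ← mulVec_nonsing_inv_mulVec hK Y,
      ← sub_mulVec]
    congr 1
    abel
  calc c * l2norm ubar ≤ c * (l2norm u + l2norm (ubar - u)) := by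
        gcongr
        simpa using l2norm_add_le u (ubar - u)
    _ = c * l2norm u + c * l2norm (ubar - u) := mul_add _ _ _
    _ ≤ c * l2norm u + l2norm ((K - Kbar) *ᵥ u) := by
        rw [← hdiff]
        gcongr
        exact hKbar.mul_l2norm_le_l2norm_add_smul_one_mulVec _
    _ ≤ c * l2norm u + spectralNorm2 (K - Kbar) * l2norm u := by
        gcongr
        exact l2norm_mulVec_le _ _

end Ridge

theorem sparsification_error_general {m : ℕ} (hm : 0 < m)
    (K Kbar : Matrix (Fin m) (Fin m) ℝ)
    (hK : K.PosSemidef) (hKbar : Kbar.PosSemidef)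
    (γ lam η : ℝ) (hγ : 0 < γ) (hlam : 0 < lam)
    (Kγ : Matrix (Fin m) (Fin m) ℝ) (hKγ : Kγ = K + (γ * m) • 1)
    (hclose : spectralNorm2 (Kγ - Kbar) ≤ η * m)
    (Y : Fin m → ℝ) (hY : l2norm Y ≤ Real.sqrt m)
    (αγ αbarγ : Fin m → ℝ)
    (hαγ : αγ = (Kγ + (lam * m) • 1)⁻¹ *ᵥ Y)
    (hαbarγ : αbarγ = (Kbar + (lam * m) • 1)⁻¹ *ᵥ Y) :
    l2norm (Kbar *ᵥ αbarγ - Y) ≤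
      l2norm (Kγ *ᵥ αγ - Y) + η * Real.sqrt m / (lam + γ) := by
  subst hαγ hαbarγ
  have hmR : (0 : ℝ) < m := Nat.cast_pos.mpr hm
  have hshift : Kγ + (lam * m) • 1 = K + ((lam + γ) * m) • 1 := by
    rw [hKγ, add_assoc, ← add_smul]
    ring_nf
  have hα_le : l2norm ((Kγ + (lam * m) • 1)⁻¹ *ᵥ Y) ≤ Real.sqrt m / ((lam + γ) * m) := by
    rw [hshift]
    exact (hK.l2norm_inv_add_smul_one_mulVec_le (by positivity) Y).trans (by gcongr)
  have hdet : IsUnit (Kγ + (lam * m) • 1).det := by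
    rw [hshift]
    exact hK.isUnit_det_add_smul_one (by positivity)
  calc l2norm (Kbar *ᵥ ((Kbar + (lam * m) • 1)⁻¹ *ᵥ Y) - Y)
      ≤ l2norm (Kγ *ᵥ ((Kγ + (lam * m) • 1)⁻¹ *ᵥ Y) - Y) +
          spectralNorm2 (Kγ - Kbar) * l2norm ((Kγ + (lam * m) • 1)⁻¹ *ᵥ Y) :=
        l2norm_ridge_residual_le_add hKbar (by positivity) hdet Y
    _ ≤ l2norm (Kγ *ᵥ ((Kγ + (lam * m) • 1)⁻¹ *ᵥ Y) - Y) +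
          η * m * (Real.sqrt m / ((lam + γ) * m)) := by
        gcongr
        · exact l2norm_nonneg _
        · exact (spectralNorm2_nonneg _).trans hclose
    _ = l2norm (Kγ *ᵥ ((Kγ + (lam * m) • 1)⁻¹ *ᵥ Y) - Y) + η * Real.sqrt m / (lam + γ) := by
        field_simp

/-- Sparsification error bound (Lemma 1, part 1). -/
theorem sparsification_error {m : ℕ} (hm : 0 < m)
    (K Kbar : Matrix (Fin m) (Fin m) ℝ)
    (hK : K.PosSemidef) (hKbar : Kbar.PosSemidef)
    (γ lam η : ℝ) (hγ : 0 < γ) (hlam : 0 < lam) (hη : 0 < η)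
    (Kγ : Matrix (Fin m) (Fin m) ℝ) (hKγ : Kγ = K + (γ * m) • 1)
    (hclose : spectralNorm2 (Kγ - Kbar) ≤ η * m)
    (Y : Fin m → ℝ) (hY : l2norm Y ≤ Real.sqrt m)
    (αγ αbarγ : Fin m → ℝ)
    (hαγ : αγ = (Kγ + (lam * m) • 1)⁻¹ *ᵥ Y)
    (hαbarγ : αbarγ = (Kbar + (lam * m) • 1)⁻¹ *ᵥ Y) :
    l2norm (Kbar *ᵥ αbarγ - Y) ≤
      l2norm (Kγ *ᵥ αγ - Y) + η * Real.sqrt m / (lam + γ) :=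
  sparsification_error_general hm K Kbar hK hKbar γ lam η hγ hlam Kγ hKγ hclose Y hY αγ αbarγ hαγ
    hαbarγ
end

section
/- Let m be a positive integer, K a real symmetric positive semidefinite m×m matrix, λ > 0, B ≥ 0, and Y ∈ ℝ^m. Set α = (K + λmI)⁻¹ Y. Then for every β ∈ ℝ^m with βᵀKβ ≤ B, one has ‖K α − Y‖₂ ≤ ‖K β − Y‖₂ + √(λ m B). -/
/-!
Write `c = λm`. The vector `α` solves `(K + cI)α = Y`, so it minimises the ridge objective
`‖Kγ - Y‖² + c γᵀKγ`: expanding it at `α + d`, the first-order term `2⟪Kα + cα - Y, Kd⟫`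
vanishes and the second-order terms `‖Kd‖² + c dᵀKd` are nonnegative. Comparing the objective at
`α` and at `β`, and dropping the nonnegative penalty at `α`, gives
`‖Kα - Y‖² ≤ ‖Kβ - Y‖² + cB`; the square root is subadditive.
-/

open Matrix

theorem Real.sqrt_add_le_add_sqrt (x y : ℝ) : √(x + y) ≤ √x + √y := by
  have le_sq_sqrt (z : ℝ) : z ≤ √z ^ 2 := by
    rcases le_total 0 z with hz | hz
    · rw [Real.sq_sqrt hz]
    · exact hz.trans (sq_nonneg _)
  refine Real.sqrt_le_iff.mpr ⟨by positivity, ?_⟩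
  nlinarith [le_sq_sqrt x, le_sq_sqrt y, Real.sqrt_nonneg x, Real.sqrt_nonneg y]

lemma l2norm_eq_sqrt_dotProduct {m : ℕ} (v : Fin m → ℝ) : l2norm v = √(v ⬝ᵥ v) := by
  simp [l2norm, dotProduct, sq]

namespace Matrix

variable {n : Type*} [Fintype n]

/-- `m` times the paper's objective `(1/m)‖Kγ - Y‖² + λ γᵀKγ`, with `c = λm`. -/
def ridgeObjective (K : Matrix n n ℝ) (Y : n → ℝ) (c : ℝ) (γ : n → ℝ) : ℝ :=
  (K *ᵥ γ - Y) ⬝ᵥ (K *ᵥ γ - Y) + c * (γ ⬝ᵥ K *ᵥ γ)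

lemma ridgeObjective_add {K : Matrix n n ℝ} (hK : K.IsSymm) (Y : n → ℝ) (c : ℝ)
    (α d : n → ℝ) :
    ridgeObjective K Y c (α + d) = ridgeObjective K Y c α
      + 2 * ((K *ᵥ α + c • α - Y) ⬝ᵥ K *ᵥ d) + (K *ᵥ d) ⬝ᵥ K *ᵥ d + c * (d ⬝ᵥ K *ᵥ d) := by
  have hsymm : d ⬝ᵥ K *ᵥ α = α ⬝ᵥ K *ᵥ d := by
    rw [← dotProduct_transpose_mulVec, hK.eq]
  simp only [ridgeObjective, mulVec_add, dotProduct_add, add_dotProduct, sub_dotProduct,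
    dotProduct_sub, smul_dotProduct, smul_eq_mul, hsymm, dotProduct_comm (K *ᵥ d) (K *ᵥ α),
    dotProduct_comm (K *ᵥ d) Y]
  ring

lemma ridgeObjective_le_of_mulVec_eq [DecidableEq n] {K : Matrix n n ℝ} (hK : K.PosSemidef)
    {Y : n → ℝ} {c : ℝ} (hc : 0 ≤ c) {α : n → ℝ} (hα : (K + c • 1) *ᵥ α = Y) (β : n → ℝ) :
    ridgeObjective K Y c α ≤ ridgeObjective K Y c β := by
  have hcrit : K *ᵥ α + c • α - Y = 0 := by
    rw [← hα, add_mulVec, smul_mulVec, one_mulVec, sub_self]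
  have hKd : 0 ≤ (β - α) ⬝ᵥ K *ᵥ (β - α) := by
    simpa using hK.dotProduct_mulVec_nonneg (β - α)
  have hsq : 0 ≤ (K *ᵥ (β - α)) ⬝ᵥ K *ᵥ (β - α) := dotProduct_self_star_nonneg _
  have hexpand := ridgeObjective_add (isHermitian_iff_isSymm.mp hK.isHermitian) Y c α (β - α)
  rw [add_sub_cancel, hcrit, zero_dotProduct, mul_zero, add_zero] at hexpand
  rw [hexpand]
  nlinarith

lemma mulVec_inv_mulVec_of_isUnit {R : Type*} [CommRing R] [DecidableEq n] {M : Matrix n n R}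
    (hM : IsUnit M) (v : n → R) : M *ᵥ (M⁻¹ *ᵥ v) = v := by
  rw [mulVec_mulVec, mul_nonsing_inv _ ((isUnit_iff_isUnit_det M).mp hM), one_mulVec]

end Matrix

theorem lagrangian_relaxation_error_general {m : ℕ} (hm : 0 < m)
    (K : Matrix (Fin m) (Fin m) ℝ) (hK : K.PosSemidef)
    (lam B : ℝ) (hlam : 0 < lam)
    (Y : Fin m → ℝ)
    (α : Fin m → ℝ) (hα : α = (K + (lam * m) • 1)⁻¹ *ᵥ Y)
    (β : Fin m → ℝ) (hβ : β ⬝ᵥ (K *ᵥ β) ≤ B) :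
    l2norm (K *ᵥ α - Y) ≤ l2norm (K *ᵥ β - Y) + Real.sqrt (lam * m * B) := by
  set c := lam * m
  have hc : 0 < c := by positivity
  have hαY : (K + c • 1) *ᵥ α = Y :=
    hα ▸ mulVec_inv_mulVec_of_isUnit (PosDef.posSemidef_add hK (PosDef.one.smul hc)).isUnit Y
  have key : (K *ᵥ α - Y) ⬝ᵥ (K *ᵥ α - Y) ≤ (K *ᵥ β - Y) ⬝ᵥ (K *ᵥ β - Y) + c * B :=
    calc (K *ᵥ α - Y) ⬝ᵥ (K *ᵥ α - Y)
        ≤ ridgeObjective K Y c α :=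
          le_add_of_nonneg_right (mul_nonneg hc.le (by simpa using hK.dotProduct_mulVec_nonneg α))
      _ ≤ ridgeObjective K Y c β := ridgeObjective_le_of_mulVec_eq hK hc.le hαY β
      _ ≤ (K *ᵥ β - Y) ⬝ᵥ (K *ᵥ β - Y) + c * B := by unfold ridgeObjective; gcongr
  rw [l2norm_eq_sqrt_dotProduct, l2norm_eq_sqrt_dotProduct]
  exact (Real.sqrt_le_sqrt key).trans (Real.sqrt_add_le_add_sqrt _ _)

/-- Lagrangian relaxation error bound (Lemma 1, part 3). -/
theorem lagrangian_relaxation_error {m : ℕ} (hm : 0 < m)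
    (K : Matrix (Fin m) (Fin m) ℝ) (hK : K.PosSemidef)
    (lam B : ℝ) (hlam : 0 < lam) (hB : 0 ≤ B)
    (Y : Fin m → ℝ)
    (α : Fin m → ℝ) (hα : α = (K + (lam * m) • 1)⁻¹ *ᵥ Y)
    (β : Fin m → ℝ) (hβ : β ⬝ᵥ (K *ᵥ β) ≤ B) :
    l2norm (K *ᵥ α - Y) ≤ l2norm (K *ᵥ β - Y) + Real.sqrt (lam * m * B) :=
  lagrangian_relaxation_error_general hm K hK lam B hlam Y α hα β hβ
end

section
/- Let m be a positive integer, K a real symmetric positive semidefinite m×m matrix with eigenvalues λ₁ ≥ λ₂ ≥ … ≥ λ_m (counted with multiplicity), and let η > 0, γ ≥ 0 satisfy γm ≤ η. Set K_γ = K + γmI. Suppose there are constants C > 0 and p > 1 such that λ_i ≤ C m · i^{−p} for all i ∈ {1,…,m}. Then the η-effective dimension satisfies tr(K_γ (K_γ + ηmI)⁻¹) ≤ 2·(C/((p−1)η))^{1/p} + 2. -/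
open Matrix

/-- Spectral (operator 2-) norm of a real square matrix. -/
noncomputable def spectralNorm₂ {m : ℕ} (A : Matrix (Fin m) (Fin m) ℝ) : ℝ :=
  ‖Matrix.toEuclideanCLM (𝕜 := ℝ) A‖

/-!
Diagonalising `K`, the trace is `∑ᵢ (λᵢ + γm) / (λᵢ + γm + ηm)`, and each term is at most
`min 1 (λᵢ / (ηm)) + γ / η ≤ min 1 ((C / η) (i + 1)⁻ᵖ) + 1 / m`.
With `b = (C / ((p - 1) η)) ^ (1 / p)`, bound the minimum by `1` for the first `⌈b⌉` indices
and by its second argument on the rest, whose sum is at most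
`∫_{⌈b⌉}^∞ (C / η) x⁻ᵖ dx ≤ b`: `b` is the threshold balancing the two parts.
-/

namespace Matrix.IsHermitian

variable {n 𝕜 : Type*} [Fintype n] [DecidableEq n] [RCLike 𝕜] {A : Matrix n n 𝕜}

theorem trace_add_smul_mul_inv_add_smul (hA : A.IsHermitian) (a b : ℝ)
    (hb : ∀ i, hA.eigenvalues i + b ≠ 0) :
    ((A + a • 1) * (A + b • 1)⁻¹).trace =
      ∑ i, (((hA.eigenvalues i + a) / (hA.eigenvalues i + b) : ℝ) : 𝕜) := by
  set φ := Unitary.conjStarAlgAut ℝ (Matrix n n 𝕜) hA.eigenvectorUnitary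
  have shift (c : ℝ) : A + c • 1 = φ (diagonal fun i ↦ ((hA.eigenvalues i + c : ℝ) : 𝕜)) := by
    have hAφ : A = φ (diagonal (RCLike.ofReal ∘ hA.eigenvalues)) := hA.spectral_theorem
    nth_rewrite 1 [hAφ]
    rw [← map_one φ, ← map_smul, ← map_add]
    congr 1
    ext i j
    rcases eq_or_ne i j with rfl | h <;> simp [*, RCLike.real_smul_eq_coe_mul]
  have inv : (A + b • 1)⁻¹ = φ (diagonal fun i ↦ ((hA.eigenvalues i + b : ℝ) : 𝕜)⁻¹) := by
    refine inv_eq_left_inv ?_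
    rw [shift, ← map_mul, diagonal_mul_diagonal, ← map_one φ, ← diagonal_one]
    congr 2
    ext i
    exact inv_mul_cancel₀ (by exact_mod_cast hb i)
  rw [shift, inv, ← map_mul, diagonal_mul_diagonal]
  simp only [φ, Unitary.conjStarAlgAut_apply, trace_mul_cycle, Unitary.coe_star_mul_self, one_mul,
    trace_diagonal, div_eq_mul_inv, RCLike.ofReal_mul, RCLike.ofReal_inv]

end Matrix.IsHermitian

theorem add_div_add_add_le_min_add {x g h y ε : ℝ} (hx : 0 ≤ x) (hg : 0 ≤ g) (hh : 0 < h)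
    (hxy : x ≤ h * y) (hgε : g ≤ h * ε) :
    (x + g) / (x + g + h) ≤ min 1 y + ε := by
  have hε : 0 ≤ ε := nonneg_of_mul_nonneg_right (hg.trans hgε) hh
  rcases le_total 1 y with hy | hy
  · rw [min_eq_left hy]
    linarith [div_le_one_of_le₀ (by linarith : x + g ≤ x + g + h) (by positivity)]
  · rw [min_eq_right hy, div_le_iff₀ (by positivity)]
    nlinarith

theorem sum_Ico_rpow_neg_le {p : ℝ} (hp : 1 < p) {n : ℕ} (hn : 0 < n) (m : ℕ) :
    ∑ i ∈ Finset.Ico n m, ((i : ℝ) + 1) ^ (-p) ≤ (n : ℝ) ^ (1 - p) / (p - 1) := by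
  have hn' : (0 : ℝ) < n := by exact_mod_cast hn
  rcases le_total m n with hmn | hnm
  · rw [Finset.Ico_eq_empty_of_le hmn, Finset.sum_empty]
    exact div_nonneg (Real.rpow_nonneg hn'.le _) (by linarith)
  have hanti : AntitoneOn (fun x : ℝ ↦ x ^ (-p)) (Set.Icc n m) := fun x hx y _ hxy ↦
    Real.rpow_le_rpow_of_nonpos (hn'.trans_le hx.1) hxy (by linarith)
  have hzero : (0 : ℝ) ∉ Set.uIcc (n : ℝ) m := by
    rw [Set.uIcc_of_le (by exact_mod_cast hnm)]
    exact fun h ↦ hn'.not_ge h.1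
  calc ∑ i ∈ Finset.Ico n m, ((i : ℝ) + 1) ^ (-p)
      ≤ ∫ x in (n : ℝ)..m, x ^ (-p) := by
        simpa using hanti.sum_le_integral_Ico hnm
    _ = ((n : ℝ) ^ (1 - p) - (m : ℝ) ^ (1 - p)) / (p - 1) := by
        rw [integral_rpow (Or.inr ⟨by linarith, hzero⟩), neg_add_eq_sub, ← neg_sub p 1, div_neg,
          ← neg_div, neg_sub]
    _ ≤ (n : ℝ) ^ (1 - p) / (p - 1) := by
        gcongr
        exact sub_le_self _ (Real.rpow_nonneg (Nat.cast_nonneg m) _)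

theorem sum_range_min_one_le (f : ℕ → ℝ) {m : ℕ} (N : ℕ) :
    ∑ i ∈ Finset.range m, min 1 (f i) ≤ N + ∑ i ∈ Finset.Ico N m, f i := by
  rcases le_total m N with hmN | hNm
  · rw [Finset.Ico_eq_empty_of_le hmN, Finset.sum_empty, add_zero]
    calc ∑ i ∈ Finset.range m, min 1 (f i) ≤ ∑ _i ∈ Finset.range m, (1 : ℝ) :=
          Finset.sum_le_sum fun i _ ↦ min_le_left _ _
      _ ≤ N := by simpa using hmN
  · rw [← Finset.sum_range_add_sum_Ico _ hNm]
    gcongr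
    · calc ∑ i ∈ Finset.range N, min 1 (f i) ≤ ∑ _i ∈ Finset.range N, (1 : ℝ) :=
            Finset.sum_le_sum fun i _ ↦ min_le_left _ _
        _ = N := by simp
    · exact min_le_right _ _

theorem sum_range_min_one_mul_rpow_neg_le {c p : ℝ} (hc : 0 < c) (hp : 1 < p) (m : ℕ) :
    ∑ i ∈ Finset.range m, min 1 (c * ((i : ℝ) + 1) ^ (-p)) ≤ 2 * (c / (p - 1)) ^ (1 / p) + 1 := by
  set b := (c / (p - 1)) ^ (1 / p)
  have hp1 : 0 < p - 1 := by linarith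
  have hb : 0 < b := by positivity
  have hbp : b ^ p = c / (p - 1) := by
    rw [← Real.rpow_mul (by positivity), one_div_mul_cancel (by linarith : p ≠ 0), Real.rpow_one]
  have hN : 0 < ⌈b⌉₊ := Nat.ceil_pos.mpr hb
  have tail : ∑ i ∈ Finset.Ico ⌈b⌉₊ m, c * ((i : ℝ) + 1) ^ (-p) ≤ b :=
    calc ∑ i ∈ Finset.Ico ⌈b⌉₊ m, c * ((i : ℝ) + 1) ^ (-p)
        ≤ c * ((⌈b⌉₊ : ℝ) ^ (1 - p) / (p - 1)) := by
          rw [← Finset.mul_sum]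
          exact mul_le_mul_of_nonneg_left (sum_Ico_rpow_neg_le hp hN m) hc.le
      _ ≤ c * (b ^ (1 - p) / (p - 1)) := by
          have hceil := Real.rpow_le_rpow_of_nonpos hb (Nat.le_ceil b) (by linarith : 1 - p ≤ 0)
          exact mul_le_mul_of_nonneg_left (div_le_div_of_nonneg_right hceil hp1.le) hc.le
      _ = b := by
          rw [Real.rpow_sub hb, Real.rpow_one, hbp]
          field_simp
  calc ∑ i ∈ Finset.range m, min 1 (c * ((i : ℝ) + 1) ^ (-p))
      ≤ ⌈b⌉₊ + ∑ i ∈ Finset.Ico ⌈b⌉₊ m, c * ((i : ℝ) + 1) ^ (-p) := sum_range_min_one_le _ _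
    _ ≤ (b + 1) + b := add_le_add (Nat.ceil_lt_add_one hb.le).le tail
    _ = 2 * b + 1 := by ring

theorem effective_dimension_polynomial_decay_general {m : ℕ} (hm : 0 < m)
    (K : Matrix (Fin m) (Fin m) ℝ) (hK : K.PosSemidef)
    (η γ : ℝ) (hη : 0 < η) (hγ : 0 ≤ γ) (hγm : γ * m ≤ η)
    (Kγ : Matrix (Fin m) (Fin m) ℝ) (hKγ : Kγ = K + (γ * m) • 1)
    (lam : Fin m → ℝ)
    (hperm : ∃ σ : Equiv.Perm (Fin m), ∀ i, lam i = hK.1.eigenvalues (σ i))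
    (C p : ℝ) (hC : 0 < C) (hp : 1 < p)
    (hdecay : ∀ i : Fin m, lam i ≤ C * m * ((i : ℝ) + 1) ^ (-p)) :
    (Kγ * (Kγ + (η * m) • 1)⁻¹).trace ≤
      2 * (C / ((p - 1) * η)) ^ (1 / p) + 2 := by
  obtain ⟨σ, hσ⟩ := hperm
  have hm' : (0 : ℝ) < m := by exact_mod_cast hm
  have htrace : (Kγ * (Kγ + (η * m) • 1)⁻¹).trace =
      ∑ i, (lam i + γ * m) / (lam i + γ * m + η * m) := by
    rw [hKγ, add_assoc, ← add_smul, hK.1.trace_add_smul_mul_inv_add_smul _ _ fun i ↦ by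
      have := hK.eigenvalues_nonneg i; positivity, ← Equiv.sum_comp σ]
    simp only [hσ, add_assoc, RCLike.ofReal_real_eq_id, id]
  have hterm (i : Fin m) : (lam i + γ * m) / (lam i + γ * m + η * m) ≤
      min 1 (C / η * ((i : ℝ) + 1) ^ (-p)) + 1 / m := by
    refine add_div_add_add_le_min_add (hσ i ▸ hK.eigenvalues_nonneg (σ i)) (by positivity)
      (by positivity) ((hdecay i).trans_eq ?_) ?_
    · field_simp
    · field_simp
      linarith
  calc (Kγ * (Kγ + (η * m) • 1)⁻¹).trace
      ≤ ∑ i : Fin m, (min 1 (C / η * ((i : ℝ) + 1) ^ (-p)) + 1 / m) :=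
        htrace ▸ Finset.sum_le_sum fun i _ ↦ hterm i
    _ = ∑ i ∈ Finset.range m, min 1 (C / η * ((i : ℝ) + 1) ^ (-p)) + 1 := by
        simp [Finset.sum_add_distrib, Fin.sum_univ_eq_sum_range
          (fun i ↦ min 1 (C / η * ((i : ℝ) + 1) ^ (-p))), hm'.ne']
    _ ≤ 2 * (C / ((p - 1) * η)) ^ (1 / p) + 2 := by
        rw [mul_comm (p - 1), ← div_div]
        linarith [sum_range_min_one_mul_rpow_neg_le (div_pos hC hη) hp m]

/-- Effective dimension bound under polynomial eigenvalue decay (Theorem 9, part 1). -/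
theorem effective_dimension_polynomial_decay {m : ℕ} (hm : 0 < m)
    (K : Matrix (Fin m) (Fin m) ℝ) (hK : K.PosSemidef)
    (η γ : ℝ) (hη : 0 < η) (hγ : 0 ≤ γ) (hγm : γ * m ≤ η)
    (Kγ : Matrix (Fin m) (Fin m) ℝ) (hKγ : Kγ = K + (γ * m) • 1)
    (lam : Fin m → ℝ) (hsort : Antitone lam)
    (hperm : ∃ σ : Equiv.Perm (Fin m), ∀ i, lam i = hK.1.eigenvalues (σ i))
    (C p : ℝ) (hC : 0 < C) (hp : 1 < p)
    (hdecay : ∀ i : Fin m, lam i ≤ C * m * ((i : ℝ) + 1) ^ (-p)) :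
    (Kγ * (Kγ + (η * m) • 1)⁻¹).trace ≤
      2 * (C / ((p - 1) * η)) ^ (1 / p) + 2 :=
  effective_dimension_polynomial_decay_general hm K hK η γ hη hγ hγm Kγ hKγ lam hperm C p hC hp
    hdecay
end

section
/- Let m be a positive integer, K a real symmetric positive semidefinite m×m matrix with eigenvalues λ₁ ≥ λ₂ ≥ … ≥ λ_m (counted with multiplicity), and let η > 0, γ ≥ 0 satisfy γm ≤ η. Set K_γ = K + γmI. Suppose there is a constant C > 0 with C ≥ (e−1)η such that λ_i ≤ C m · e^{−i} for all i ∈ {1,…,m}. Then the η-effective dimension satisfies tr(K_γ (K_γ + ηmI)⁻¹) ≤ log(C/((e−1)η)) + 3, where log denotes the natural logarithm. -/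
/-!
Diagonalising `K` turns the trace into `∑ᵢ (λᵢ + γm) / (λᵢ + γm + ηm)`. Each term is at most `1`
and, because `γm ≤ η`, at most `(C/η) e^{-(i+1)} + 1/m`. With `b = C / ((e - 1) η) ≥ 1`, bound the
first `n = ⌈log b⌉` terms by `1` and the others by the second bound: their geometric tail is
`b e^{-n} ≤ 1` and the `1/m` parts add up to at most `1`, so the trace is at most
`n + 2 ≤ log b + 3`.
-/

open Matrix

/-- Spectral (operator 2-) norm of a real square matrix. -/
noncomputable def matSpectralNorm {m : ℕ} (A : Matrix (Fin m) (Fin m) ℝ) : ℝ :=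
  ‖Matrix.toEuclideanCLM (𝕜 := ℝ) A‖

namespace Matrix.IsHermitian

variable {𝕜 n : Type*} [RCLike 𝕜] [Fintype n] [DecidableEq n] {A : Matrix n n 𝕜}

lemma trace_cfc (hA : A.IsHermitian) (f : ℝ → ℝ) :
    (cfc f A).trace = ∑ i, (f (hA.eigenvalues i) : 𝕜) := by
  rw [hA.cfc_eq, IsHermitian.cfc, Unitary.conjStarAlgAut_apply, trace_mul_cycle,
    Unitary.coe_star_mul_self, one_mul, trace_diagonal]
  rfl

lemma add_smul_one_mul_inv_add_smul_one (hA : A.IsHermitian) {a b : ℝ}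
    (hb : ∀ i, hA.eigenvalues i + b ≠ 0) :
    (A + a • 1) * (A + b • 1)⁻¹ = cfc (fun x ↦ (x + a) / (x + b)) A := by
  have hb' : ∀ x ∈ spectrum ℝ A, x + b ≠ 0 := by
    rw [hA.spectrum_real_eq_range_eigenvalues]
    rintro - ⟨i, rfl⟩
    exact hb i
  have hA' : IsSelfAdjoint A := hA
  simp only [div_eq_mul_inv]
  rw [cfc_mul (fun x ↦ x + a) (fun x ↦ (x + b)⁻¹) A
      (hg := A.finite_real_spectrum.continuousOn _), cfc_inv (fun x ↦ x + b) A hb',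
    cfc_add_const a (fun x ↦ x) A, cfc_add_const b (fun x ↦ x) A, cfc_id' ℝ A,
    nonsing_inv_eq_ringInverse, Algebra.algebraMap_eq_smul_one, Algebra.algebraMap_eq_smul_one]

end Matrix.IsHermitian

open Finset in
lemma sum_range_min_one_mul_pow_le {a r : ℝ} (ha : 0 ≤ a) (hr₀ : 0 ≤ r) (hr₁ : r < 1)
    (N n : ℕ) : ∑ k ∈ range N, min 1 (a * r ^ k) ≤ n + a * r ^ n / (1 - r) := by
  calc ∑ k ∈ range N, min 1 (a * r ^ k)
      ≤ ∑ k ∈ range (n + N), min 1 (a * r ^ k) :=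
        sum_le_sum_of_subset_of_nonneg (range_mono (by omega)) fun _ _ _ ↦ by positivity
    _ = ∑ k ∈ range n, min 1 (a * r ^ k) + ∑ k ∈ Ico n (n + N), min 1 (a * r ^ k) :=
        (sum_range_add_sum_Ico _ (by omega)).symm
    _ ≤ ∑ k ∈ range n, 1 + ∑ k ∈ Ico n (n + N), a * r ^ k :=
        add_le_add (sum_le_sum fun _ _ ↦ min_le_left _ _) (sum_le_sum fun _ _ ↦ min_le_right _ _)
    _ ≤ n + a * r ^ n / (1 - r) := by
        rw [sum_const, card_range, nsmul_one, ← mul_sum, mul_div_assoc]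
        gcongr
        exact geom_sum_Ico_le_of_lt_one hr₀ hr₁

lemma nat_ceil_log_add_mul_exp_neg_le {b : ℝ} (hb : 1 ≤ b) :
    (⌈Real.log b⌉₊ : ℝ) + b * Real.exp (-⌈Real.log b⌉₊) ≤ Real.log b + 2 := by
  have hlog : 0 ≤ Real.log b := Real.log_nonneg hb
  have hexp : b * Real.exp (-⌈Real.log b⌉₊) ≤ 1 := by
    calc b * Real.exp (-⌈Real.log b⌉₊) ≤ b * Real.exp (-Real.log b) := by
          gcongr; exact Nat.le_ceil _
      _ = 1 := by rw [Real.exp_neg, Real.exp_log (by linarith), mul_inv_cancel₀ (by positivity)]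
  linarith [Nat.ceil_lt_add_one hlog]

lemma div_add_le_min_one_div {u e : ℝ} (hu : 0 ≤ u) (he : 0 < e) :
    u / (u + e) ≤ min 1 (u / e) :=
  le_min ((div_le_one (by positivity)).2 (by linarith))
    (div_le_div_of_nonneg_left hu he (by linarith))

open Real Finset in
lemma sum_div_add_le_log_add_three {m : ℕ} {η γ C : ℝ} (hη : 0 < η) (hγ : 0 ≤ γ)
    (hγm : γ * m ≤ η) (hC : (exp 1 - 1) * η ≤ C) (x : Fin m → ℝ) (hx : ∀ i, 0 ≤ x i)
    (hdecay : ∀ i : Fin m, x i ≤ C * m * exp (-((i : ℝ) + 1))) :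
    ∑ i, (x i + γ * m) / (x i + γ * m + η * m) ≤ log (C / ((exp 1 - 1) * η)) + 3 := by
  set r := exp (-1)
  set a := C / η * r
  set b := C / ((exp 1 - 1) * η)
  set n := ⌈log b⌉₊
  have he : 0 < exp 1 - 1 := by linarith [add_one_lt_exp (one_ne_zero (α := ℝ))]
  have ha : 0 ≤ a := mul_nonneg (div_nonneg (by linarith [mul_pos he hη]) hη.le) (exp_pos _).le
  have hb : 1 ≤ b := (one_le_div (by positivity)).2 hC
  have hr₁ : r < 1 := exp_lt_one_iff.2 (by norm_num)
  have hexp : ∀ k : ℕ, exp (-((k : ℝ) + 1)) = r * r ^ k := by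
    intro k; rw [← exp_nat_mul, ← exp_add]; ring_nf
  have hterm : ∀ i : Fin m, (x i + γ * m) / (x i + γ * m + η * m) ≤
      min 1 (a * r ^ (i : ℕ)) + 1 / m := by
    intro i
    have hm : (0 : ℝ) < m := by exact_mod_cast i.pos
    have hdiv : (x i + γ * m) / (η * m) ≤ a * r ^ (i : ℕ) + 1 / m :=
      calc (x i + γ * m) / (η * m) ≤ (C * m * exp (-((i : ℝ) + 1)) + η) / (η * m) := by
            gcongr; linarith [hdecay i]
        _ = a * r ^ (i : ℕ) + 1 / m := by rw [hexp]; simp only [a]; field_simp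
    calc (x i + γ * m) / (x i + γ * m + η * m) ≤ min 1 ((x i + γ * m) / (η * m)) :=
          div_add_le_min_one_div (by linarith [hx i, mul_nonneg hγ hm.le]) (by positivity)
      _ ≤ min 1 (a * r ^ (i : ℕ) + 1 / m) := min_le_min_left _ hdiv
      _ ≤ min 1 (a * r ^ (i : ℕ)) + 1 / m := by
          rw [← min_add_add_right]; exact min_le_min_right _ (by simp)
  have htail : a * r ^ n / (1 - r) = b * exp (-n) := by
    have hrn : r ^ n = exp (-n) := by rw [← exp_nat_mul]; ring_nf
    rw [hrn]
    simp only [a, b, r, exp_neg 1]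
    field_simp
  calc ∑ i, (x i + γ * m) / (x i + γ * m + η * m)
      ≤ ∑ i : Fin m, (min 1 (a * r ^ (i : ℕ)) + 1 / m) := sum_le_sum fun i _ ↦ hterm i
    _ = ∑ k ∈ range m, min 1 (a * r ^ k) + m * (1 / m) := by
        rw [sum_add_distrib, Fin.sum_univ_eq_sum_range (fun k ↦ min 1 (a * r ^ k)), sum_const,
          card_univ, Fintype.card_fin, nsmul_eq_mul]
    _ ≤ (n + a * r ^ n / (1 - r)) + 1 := by
        gcongr
        · exact sum_range_min_one_mul_pow_le ha (exp_pos _).le hr₁ m n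
        · rw [mul_one_div]; exact div_self_le_one _
    _ ≤ log b + 3 := by linarith [nat_ceil_log_add_mul_exp_neg_le hb]

theorem effective_dimension_exponential_decay_general {m : ℕ}
    (K : Matrix (Fin m) (Fin m) ℝ) (hK : K.PosSemidef)
    (η γ : ℝ) (hη : 0 < η) (hγ : 0 ≤ γ) (hγm : γ * m ≤ η)
    (Kγ : Matrix (Fin m) (Fin m) ℝ) (hKγ : Kγ = K + (γ * m) • 1)
    (lam : Fin m → ℝ)
    (hperm : ∃ σ : Equiv.Perm (Fin m), ∀ i, lam i = hK.1.eigenvalues (σ i))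
    (C : ℝ) (hC' : (Real.exp 1 - 1) * η ≤ C)
    (hdecay : ∀ i : Fin m, lam i ≤ C * m * Real.exp (-((i : ℝ) + 1))) :
    (Kγ * (Kγ + (η * m) • 1)⁻¹).trace ≤
      Real.log (C / ((Real.exp 1 - 1) * η)) + 3 := by
  obtain ⟨σ, hσ⟩ := hperm
  have hshift : ∀ i, hK.1.eigenvalues i + (γ * m + η * m) ≠ 0 := fun i ↦
    (add_pos_of_nonneg_of_pos (hK.eigenvalues_nonneg i)
      (by have := i.pos; positivity)).ne'
  have htrace : (Kγ * (Kγ + (η * m) • 1)⁻¹).trace =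
      ∑ i, (lam i + γ * m) / (lam i + γ * m + η * m) := by
    rw [hKγ, add_assoc, ← add_smul, hK.1.add_smul_one_mul_inv_add_smul_one hshift,
      hK.1.trace_cfc, ← Equiv.sum_comp σ]
    simp only [hσ, add_assoc, RCLike.ofReal_real_eq_id, id]
  rw [htrace]
  exact sum_div_add_le_log_add_three hη hγ hγm hC' lam
    (fun i ↦ hσ i ▸ hK.eigenvalues_nonneg _) hdecay

/-- Effective dimension bound under exponential eigenvalue decay (Theorem 9, part 2). -/
theorem effective_dimension_exponential_decay {m : ℕ} (hm : 0 < m)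
    (K : Matrix (Fin m) (Fin m) ℝ) (hK : K.PosSemidef)
    (η γ : ℝ) (hη : 0 < η) (hγ : 0 ≤ γ) (hγm : γ * m ≤ η)
    (Kγ : Matrix (Fin m) (Fin m) ℝ) (hKγ : Kγ = K + (γ * m) • 1)
    (lam : Fin m → ℝ) (hsort : Antitone lam)
    (hperm : ∃ σ : Equiv.Perm (Fin m), ∀ i, lam i = hK.1.eigenvalues (σ i))
    (C : ℝ) (hC : 0 < C) (hC' : (Real.exp 1 - 1) * η ≤ C)
    (hdecay : ∀ i : Fin m, lam i ≤ C * m * Real.exp (-((i : ℝ) + 1))) :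
    (Kγ * (Kγ + (η * m) • 1)⁻¹).trace ≤
      Real.log (C / ((Real.exp 1 - 1) * η)) + 3 :=
  effective_dimension_exponential_decay_general K hK η γ hη hγ hγm Kγ hKγ lam hperm C hC' hdecay
end
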